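/- Let t be the integer array with t(i,1) = 1, t(1,j) = g(j) (where g(1) = 1, g(2) = -2, g(3) = 2, g(4) = -10, and g(j) = -g(j-1) + 3g(j-2) - g(j-3) for j ≥ 5), and t(i,j) = t(i-1,j-1) + t(i-1,j) + t(i,j-1) for i,j ≥ 2. Then for every n ≥ 1, the consecutive diagonal entries satisfy t(n,n) + t(n+1,n+1) = Sch(n-1), where Sch(m) = Σ_{k=0}^{m} Catalan(k) · C(m+k, 2k) is the m-th large Schröder number. -/

import Mathlib

/-- First-row sequence: `g 1 = 1`, `g 2 = -2`, `g 3 = 2`, `g 4 = -10`, and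
`g j = -g (j-1) + 3·g (j-2) - g (j-3)` for `j ≥ 5`. (`g 0` is a junk value.) -/
def gseq : ℕ → ℤ
  | 0 => 0
  | 1 => 1
  | 2 => -2
  | 3 => 2
  | 4 => -10
  | j + 5 => -gseq (j + 4) + 3 * gseq (j + 3) - gseq (j + 2)

/-- The square array `t`: `t i 1 = 1` for `i ≥ 1`, `t 1 j = gseq j`, and
`t i j = t (i-1) (j-1) + t (i-1) j + t i (j-1)` for `i, j ≥ 2`.
(Values with a zero index are junk.) -/
def tarr : ℕ → ℕ → ℤ
  | _, 0 => 0
  | _, 1 => 1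
  | 0, _ => 0
  | 1, j => gseq j
  | i + 2, j + 2 => tarr (i + 1) (j + 1) + tarr (i + 1) (j + 2) + tarr (i + 2) (j + 1)

/-- The large Schröder numbers. -/
def schroeder (m : ℕ) : ℕ := ∑ k ∈ Finset.range (m + 1), catalan k * (m + k).choose (2 * k)

/-!
The Delannoy numbers `D a b = ∑ₖ C(a, k) C(b + k, a)` satisfy the recurrence
`f (i+1) (j+1) = f i j + f i (j+1) + f (i+1) j`, which determines a function on `ℕ × ℕ` from its
values on the two axes. The sums `u i j = t (i+1) (j+1) + t (i+2) (j+2)` satisfy it on all of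
`ℕ × ℕ`, and comparing boundary values gives
`u i (j+1) = D i (j+2) + D i (j+1) - D (i+1) (j+1) - D (i+1) j`.
On the diagonal, by symmetry of `D`, this is `D (m+1) (m+1) - D (m+2) m`. Writing both Delannoy
numbers as sums over the number of non-diagonal steps, the two terms are
`C(m+1+k, 2k) C(2k, k)` and `C(m+1+k, 2k) C(2k, k+1)`, whose difference is
`Catalan(k) C(m+1+k, 2k)`, the `k`-th term of `Sch(m+1)`.
-/

open Finset

def IsDelannoyRec {M : Type*} [Add M] (f : ℕ → ℕ → M) : Prop :=
  ∀ i j, f (i + 1) (j + 1) = f i j + f i (j + 1) + f (i + 1) j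

namespace IsDelannoyRec

variable {M : Type*}

theorem ext [Add M] {f g : ℕ → ℕ → M} (hf : IsDelannoyRec f) (hg : IsDelannoyRec g)
    (h_left : ∀ j, f 0 j = g 0 j) (h_right : ∀ i, f i 0 = g i 0) : f = g := by
  funext i j
  induction i generalizing j with
  | zero => exact h_left j
  | succ i ih =>
    induction j with
    | zero => exact h_right (i + 1)
    | succ j ihj => rw [hf, hg, ih, ih, ihj]

theorem swap [AddCommSemigroup M] {f : ℕ → ℕ → M} (hf : IsDelannoyRec f) :
    IsDelannoyRec (Function.swap f) := fun i j => by
  simp only [Function.swap, hf j i, add_right_comm]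

theorem comp_succ_left [Add M] {f : ℕ → ℕ → M} (hf : IsDelannoyRec f) :
    IsDelannoyRec (fun i j => f (i + 1) j) := fun i j => hf (i + 1) j

theorem comp_succ_right [Add M] {f : ℕ → ℕ → M} (hf : IsDelannoyRec f) :
    IsDelannoyRec (fun i j => f i (j + 1)) := fun i j => hf i (j + 1)

theorem add [AddCommSemigroup M] {f g : ℕ → ℕ → M} (hf : IsDelannoyRec f)
    (hg : IsDelannoyRec g) : IsDelannoyRec (f + g) := fun i j => by
  simp only [Pi.add_apply, hf i j, hg i j]
  ac_rfl

theorem sub [AddCommGroup M] {f g : ℕ → ℕ → M} (hf : IsDelannoyRec f)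
    (hg : IsDelannoyRec g) : IsDelannoyRec (f - g) := fun i j => by
  simp only [Pi.sub_apply, hf i j, hg i j]
  abel

theorem natCast [AddMonoidWithOne M] {f : ℕ → ℕ → ℕ} (hf : IsDelannoyRec f) :
    IsDelannoyRec (fun i j => (f i j : M)) := fun i j => by
  simp only [hf i j, Nat.cast_add]

end IsDelannoyRec

def delannoy (a b : ℕ) : ℕ := ∑ k ∈ range (a + 1), a.choose k * (b + k).choose a

@[simp] theorem delannoy_zero_left (b : ℕ) : delannoy 0 b = 1 := by simp [delannoy]

@[simp] theorem delannoy_zero_right (a : ℕ) : delannoy a 0 = 1 := by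
  rw [delannoy, sum_eq_single_of_mem a (self_mem_range_succ a)]
  · simp
  · intro k hk hka
    rw [mem_range] at hk
    rw [zero_add, Nat.choose_eq_zero_of_lt (n := k) (by omega), mul_zero]

theorem isDelannoyRec_delannoy : IsDelannoyRec delannoy := by
  intro a b
  have pascal : ∀ k, (b + 1 + k).choose (a + 1) = (b + k).choose a + (b + k).choose (a + 1) :=
    fun k => by rw [add_right_comm, Nat.choose_succ_succ']
  have shift : ∑ k ∈ range (a + 2), (a + 1).choose k * (b + k).choose a
      = delannoy a b + delannoy a (b + 1) := by
    have hD : ∑ k ∈ range (a + 2), a.choose k * (b + k).choose a = delannoy a b := by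
      rw [sum_range_succ, Nat.choose_succ_self, zero_mul, add_zero, delannoy]
    rw [sum_range_succ', ← hD, sum_range_succ' (fun k => a.choose k * (b + k).choose a)]
    simp only [Nat.choose_succ_succ', add_mul, sum_add_distrib, delannoy, Nat.choose_zero_right]
    ring_nf
  simp only [delannoy] at shift ⊢
  simp only [pascal, mul_add, sum_add_distrib, shift]

theorem delannoy_comm (a b : ℕ) : delannoy a b = delannoy b a :=
  congrFun₂ (isDelannoyRec_delannoy.ext isDelannoyRec_delannoy.swap
    (fun j => by simp [Function.swap]) (fun i => by simp [Function.swap])) a b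

theorem delannoy_one_left (b : ℕ) : delannoy 1 b = 2 * b + 1 := by
  simp [delannoy, sum_range_succ]
  ring

theorem delannoy_two_left (b : ℕ) : delannoy 2 b = 2 * b ^ 2 + 2 * b + 1 := by
  induction b with
  | zero => simp
  | succ b ih =>
    rw [isDelannoyRec_delannoy 1 b, ih, delannoy_one_left, delannoy_one_left]
    ring

-- Both sides are the trinomial coefficient `(m + k)! / ((m - k)! (k + r)! (k - r)!)`.
theorem Nat.choose_add_mul_choose_add (m k r : ℕ) :
    (m + r).choose (k + r) * (m + k).choose (m + r)
      = (m + k).choose (2 * k) * (2 * k).choose (k + r) := by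
  rcases lt_or_ge k r with hkr | hrk
  · rw [Nat.choose_eq_zero_of_lt (n := m + k) (by omega),
      Nat.choose_eq_zero_of_lt (n := 2 * k) (by omega), mul_zero, mul_zero]
  rcases lt_or_ge m k with hmk | hkm
  · rw [Nat.choose_eq_zero_of_lt (n := m + r) (by omega),
      Nat.choose_eq_zero_of_lt (n := m + k) (k := 2 * k) (by omega), zero_mul, zero_mul]
  rw [mul_comm, Nat.choose_mul (by omega), Nat.choose_mul (by omega)]
  congr 1
  exact Nat.choose_symm_of_eq_add (by omega)

theorem delannoy_self (m : ℕ) :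
    delannoy m m = ∑ k ∈ range (m + 1), (m + k).choose (2 * k) * (2 * k).choose k := by
  refine sum_congr rfl fun k _ => ?_
  simpa using Nat.choose_add_mul_choose_add m k 0

theorem delannoy_add_two_self (m : ℕ) :
    delannoy (m + 2) m
      = ∑ k ∈ range (m + 2), (m + 1 + k).choose (2 * k) * (2 * k).choose (k + 1) := by
  rw [delannoy, sum_range_succ', Nat.choose_eq_zero_of_lt (n := m + 0) (by omega), mul_zero,
    add_zero]
  refine sum_congr rfl fun k _ => ?_
  rw [← Nat.choose_add_mul_choose_add]
  ring_nf

theorem catalan_add_choose_succ (k : ℕ) :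
    catalan k + (2 * k).choose (k + 1) = (2 * k).choose k := by
  apply Nat.eq_of_mul_eq_mul_left k.succ_pos
  have h := Nat.choose_succ_right_eq (2 * k) k
  rw [show 2 * k - k = k by omega] at h
  rw [mul_add, succ_mul_catalan_eq_centralBinom, Nat.centralBinom_eq_two_mul_choose]
  linarith

theorem schroeder_add_delannoy (m : ℕ) :
    schroeder (m + 1) + delannoy (m + 2) m = delannoy (m + 1) (m + 1) := by
  rw [schroeder, delannoy_add_two_self, delannoy_self, ← sum_add_distrib]
  refine sum_congr rfl fun k _ => ?_
  rw [← catalan_add_choose_succ]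
  ring

-- The left side is `(E² + 2E - 1) gseq` at `j + 2`, and `gseq` satisfies `(E - 1)(E² + 2E - 1) gseq = 0`
-- from index `2` on.
theorem gseq_add_four_add_two_mul_sub (j : ℕ) :
    gseq (j + 4) + 2 * gseq (j + 3) - gseq (j + 2) = -4 := by
  induction j with
  | zero => rfl
  | succ j ih =>
    have h : gseq (j + 5) = -gseq (j + 4) + 3 * gseq (j + 3) - gseq (j + 2) := rfl
    linarith

theorem tarr_one_right (i : ℕ) : tarr i 1 = 1 := by
  rcases i with _ | _ | _ <;> simp [tarr]

theorem tarr_one_left (j : ℕ) : tarr 1 j = gseq j := by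
  rcases j with _ | _ | _ <;> simp [tarr, gseq]

theorem tarr_add_two_add_two (i j : ℕ) :
    tarr (i + 2) (j + 2) = tarr (i + 1) (j + 1) + tarr (i + 1) (j + 2) + tarr (i + 2) (j + 1) := by
  rw [tarr]

theorem tarr_succ_two (i : ℕ) : tarr (i + 1) 2 = 2 * i - 2 := by
  induction i with
  | zero => simp [tarr_one_left, gseq]
  | succ i ih =>
    rw [tarr_add_two_add_two, tarr_one_right, tarr_one_right, ih]
    push_cast
    ring

def tarrDiagAdd (i j : ℕ) : ℤ := tarr (i + 1) (j + 1) + tarr (i + 2) (j + 2)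

theorem isDelannoyRec_tarrDiagAdd : IsDelannoyRec tarrDiagAdd := fun i j => by
  simp only [tarrDiagAdd, tarr_add_two_add_two (i + 1) (j + 1), tarr_add_two_add_two i j]
  ring

theorem tarrDiagAdd_zero_right (i : ℕ) : tarrDiagAdd i 0 = 2 * i + 1 := by
  rw [tarrDiagAdd, tarr_one_right, tarr_succ_two]
  push_cast
  ring

theorem tarrDiagAdd_one_right (i : ℕ) : tarrDiagAdd i 1 = 2 * i ^ 2 + 2 * i - 2 := by
  induction i with
  | zero => norm_num [tarrDiagAdd, tarr, gseq]
  | succ i ih =>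
    rw [isDelannoyRec_tarrDiagAdd, ih, tarrDiagAdd_zero_right, tarrDiagAdd_zero_right]
    push_cast
    ring

theorem tarrDiagAdd_zero_succ (j : ℕ) : tarrDiagAdd 0 (j + 1) = -4 * j - 2 := by
  induction j with
  | zero => norm_num [tarrDiagAdd, tarr, gseq]
  | succ j ih =>
    have h := gseq_add_four_add_two_mul_sub j
    have step : tarr 2 (j + 4) = tarr 1 (j + 3) + tarr 1 (j + 4) + tarr 2 (j + 3) :=
      tarr_add_two_add_two 0 (j + 2)
    change tarr 1 (j + 2) + tarr 2 (j + 3) = _ at ih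
    change tarr 1 (j + 3) + tarr 2 (j + 4) = _
    simp only [tarr_one_left] at ih step ⊢
    push_cast
    linarith

theorem tarrDiagAdd_succ_right (i j : ℕ) :
    tarrDiagAdd i (j + 1) = (delannoy i (j + 2) + delannoy i (j + 1) : ℤ)
      - delannoy (i + 1) (j + 1) - delannoy (i + 1) j := by
  have hD : IsDelannoyRec (fun i j => (delannoy i j : ℤ)) := isDelannoyRec_delannoy.natCast
  have key := isDelannoyRec_tarrDiagAdd.comp_succ_right.ext
    (((hD.comp_succ_right.comp_succ_right.add hD.comp_succ_right).sub
      hD.comp_succ_left.comp_succ_right).sub hD.comp_succ_left)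
    (fun j => ?_) (fun i => ?_)
  · exact congrFun₂ key i j
  · simp [tarrDiagAdd_zero_succ, delannoy_one_left]
    ring
  · simp [tarrDiagAdd_one_right, delannoy_comm _ 1, delannoy_comm _ 2, delannoy_one_left,
      delannoy_two_left]
    ring

/-- Consecutive diagonal entries of the array sum to a large Schröder number:
`t(n,n) + t(n+1,n+1) = Sch(n-1)` for `n ≥ 1`. -/
theorem tarr_diag_add_eq_schroeder (n : ℕ) (hn : 1 ≤ n) :
    tarr n n + tarr (n + 1) (n + 1) = (schroeder (n - 1) : ℤ) := by
  obtain ⟨m, rfl⟩ := Nat.exists_eq_add_of_le' hn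
  rcases m with _ | m
  · norm_num [tarr, gseq, schroeder]
  · have h := tarrDiagAdd_succ_right (m + 1) m
    rw [tarrDiagAdd, delannoy_comm (m + 1) (m + 2)] at h
    have hS : (schroeder (m + 1) + delannoy (m + 2) m : ℤ) = delannoy (m + 1) (m + 1) := by
      exact_mod_cast schroeder_add_delannoy m
    simp only [Nat.add_sub_cancel]
    linarith
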